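/- arXiv:1403.6230 — 2 statements merged into one kernel-verified Lean document; each statement's English description precedes it below -/
import Mathlib

section
/- For words x₁, x₂, x₃ over Σ₁ with l ≤ rk(x₁) and l ≤ j < l + rk(x₂): (x₁ ⊙_l x₂) ⊙_j x₃ = x₁ ⊙_l (x₂ ⊙_{j − l + 1} x₃). -/
/-- Words over `Σ₁ = Σ ∪ {1}`: the separator `1` is `none`; the rank of a word
is the number of occurrences of the separator. -/
def rk {α : Type*} (w : List (Option α)) : ℕ := w.countP (·.isNone)

/-- `icl u j v` is the intercalation `u ⊙_j v`: replace the `j`-th occurrence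
(counting from 1) of the separator in `u` by the word `v`. -/
def icl {α : Type*} : List (Option α) → ℕ → List (Option α) → List (Option α)
  | [], _, _ => []
  | none :: t, j, v => if j = 1 then v ++ t else none :: icl t (j - 1) v
  | some a :: t, j, v => some a :: icl t j v

/-!
Inserting `x₂` at the `l`-th separator of `x₁` turns the separators of `x₂` into the
`l`-th to `(l + rk x₂ - 1)`-th separators of the result, so `⊙_j` for `j` in that range
acts inside the inserted copy of `x₂`, at its `(j - l + 1)`-th separator. Formally this is
an induction on `x₁`; at the separator where `x₂` is inserted it reduces to the fact that
intercalating at a separator of `u` does not see a suffix appended to `u`.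
-/

section

variable {α : Type*}

@[simp]
theorem rk_nil : rk ([] : List (Option α)) = 0 := rfl

@[simp]
theorem rk_cons_none (t : List (Option α)) : rk (none :: t) = rk t + 1 := by
  simp [rk]

@[simp]
theorem rk_cons_some (a : α) (t : List (Option α)) : rk (some a :: t) = rk t := by
  simp [rk]

@[simp]
theorem icl_zero (u v : List (Option α)) : icl u 0 v = u := by
  induction u with
  | nil => rfl
  | cons a t ih => cases a <;> simp [icl, ih]

theorem icl_append_of_le_rk {u : List (Option α)} {j : ℕ} (h : j ≤ rk u)
    (t v : List (Option α)) : icl (u ++ t) j v = icl u j v ++ t := by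
  induction u generalizing j with
  | nil =>
    obtain rfl : j = 0 := by simpa using h
    simp
  | cons a u ih =>
    cases a with
    | none =>
      by_cases hj : j = 1
      · simp [icl, hj]
      · simp [icl, hj, ih (show j - 1 ≤ rk u by simp at h; omega)]
    | some a => simp [icl, ih (by simpa using h)]

end

theorem icl_icl_mid_general {α : Type*} (x₁ x₂ x₃ : List (Option α)) (j l : ℕ)
    (h1 : 1 ≤ l) (hlj : l ≤ j) (hj : j < l + rk x₂) :
    icl (icl x₁ l x₂) j x₃ = icl x₁ l (icl x₂ (j - l + 1) x₃) := by
  induction x₁ generalizing l j with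
  | nil => simp [icl]
  | cons a t ih =>
    cases a with
    | some a => simp [icl, ih j l h1 hlj hj]
    | none =>
      by_cases hl1 : l = 1
      · subst hl1
        simp [icl, icl_append_of_le_rk (show j ≤ rk x₂ by omega), Nat.sub_add_cancel hlj]
      · have hj1 : j ≠ 1 := by omega
        have hjl : j - 1 - (l - 1) = j - l := by omega
        simp [icl, hl1, hj1, ih (j - 1) (l - 1) (by omega) (by omega) (by omega), hjl]

/-- `(x₁ ⊙_l x₂) ⊙_j x₃ = x₁ ⊙_l (x₂ ⊙_{j − l + 1} x₃)` when
`1 ≤ l ≤ rk x₁` and `l ≤ j < l + rk x₂`. -/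
theorem icl_icl_mid {α : Type*} (x₁ x₂ x₃ : List (Option α)) (j l : ℕ)
    (h1 : 1 ≤ l) (hl : l ≤ rk x₁) (hlj : l ≤ j) (hj : j < l + rk x₂) :
    icl (icl x₁ l x₂) j x₃ = icl x₁ l (icl x₂ (j - l + 1) x₃) :=
  icl_icl_mid_general x₁ x₂ x₃ j l h1 hlj hj
end

section
/- Let T be a finite rooted tree with a rank labeling, and define a pump in T to be a pair of internal nodes (v, v') with the same nonterminal label such that v' is a direct descendant of v (all nodes between them have the same rank). Let T' be obtained from T by collapsing a pump (v, v'), i.e., replacing the subtree rooted at v by the subtree rooted at v'. If a pair of nodes (v₁, v₂) forms a pump in T', then (v₁, v₂) already formed a pump in T. -/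
/-- We model a rooted labeled tree on a node type `V` by a parent function
`parent : V → V` (the root being its own parent), together with a rank labeling
`rk` and a nonterminal labeling `label`.  `v'` is a direct descendant of `v` if
it is a proper descendant and all nodes on the connecting path share the rank. -/
def DirectDescP {V : Type*} (parent : V → V) (rk : V → ℕ) (v v' : V) : Prop :=
  Relation.TransGen (fun a b => parent b = a ∧ rk a = rk b) v v'

/-- `(v, v')` is a pump: equal nonterminal labels and `v'` a direct descendant of `v`. -/
def IsPump {V N : Type*} (parent : V → V) (rk : V → ℕ) (label : V → N) (v v' : V) : Prop :=
  label v = label v' ∧ DirectDescP parent rk v v'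

/-- `x` is a (reflexive) descendant of `v`. -/
def Desc {V : Type*} (parent : V → V) (v x : V) : Prop :=
  Relation.ReflTransGen (fun a b => parent b = a) v x

/-- Along a direct-descendance chain all ranks agree. -/
lemma DirectDescP.rk_eq {V : Type*} {parent : V → V} {rk : V → ℕ} {v v' : V}
    (h : DirectDescP parent rk v v') : rk v = rk v' := by
  induction h with
  | single hs => exact hs.2
  | tail _ hs ih => exact ih.trans hs.2

/-- collapsing a pump `(v, v')` replaces the subtree at `v` by the
subtree at `v'`; the nodes of the collapsed tree `T'` are the descendants of `v'`
together with the non-descendants of `v`, and its parent function is `parent`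
except that the parent of `v'` becomes the old parent of `v`.  If `(v₁, v₂)`
forms a pump in `T'`, it already formed a pump in `T`. -/
theorem collapse_pump {V N : Type*} [DecidableEq V] (parent : V → V) (rk : V → ℕ) (label : V → N)
    (v v' : V) (hpump : IsPump parent rk label v v')
    (parent' : V → V)
    (hparent' : ∀ x, parent' x = if x = v' then parent v else parent x)
    (v₁ v₂ : V)
    (hv₁ : Desc parent v' v₁ ∨ ¬ Desc parent v v₁)
    (hv₂ : Desc parent v' v₂ ∨ ¬ Desc parent v v₂)
    (h : IsPump parent' rk label v₁ v₂) :
    IsPump parent rk label v₁ v₂ := by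
  obtain ⟨hl, hd⟩ := h
  refine ⟨hl, ?_⟩
  have key : ∀ a b : V, (parent' b = a ∧ rk a = rk b) → DirectDescP parent rk a b := by
    rintro a b ⟨hp, hr⟩
    rw [hparent'] at hp
    by_cases hb : b = v'
    · rw [if_pos hb] at hp
      subst hp
      rw [hb] at hr ⊢
      have hrk : rk v = rk v' := hpump.2.rk_eq
      exact (Relation.TransGen.single ⟨rfl, hr.trans hrk.symm⟩).trans hpump.2
    · rw [if_neg hb] at hp
      exact Relation.TransGen.single ⟨hp, hr⟩
  clear hl hv₁ hv₂
  induction hd with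
  | single hs => exact key _ _ hs
  | tail _ hs ih => exact ih.trans (key _ _ hs)
end
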